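/- Let C be a collection for a discrete Morse-Bott function f on a finite abstract simplicial complex K. If σ ∈ C is upward noncritical with respect to C, then every face of σ that lies in C is also upward noncritical with respect to C. -/

import Mathlib

open Finset

noncomputable section
open scoped Classical

/-- `σ` is a facet of `τ`: `σ ⊆ τ` and `dim σ = dim τ − 1`. -/
def Facet (σ τ : Finset ℕ) : Prop := σ ⊆ τ ∧ σ.card + 1 = τ.card

/-- A finite abstract simplicial complex: a finite family of nonempty finite sets
closed under taking nonempty subsets. -/
def IsComplex (K : Finset (Finset ℕ)) : Prop :=
  (∀ σ ∈ K, σ.Nonempty) ∧ ∀ σ ∈ K, ∀ ν, ν ⊆ σ → ν.Nonempty → ν ∈ K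

/-- The closure of a set of cells: all nonempty subsets of its cells. -/
def closureOf (S : Finset (Finset ℕ)) : Finset (Finset ℕ) :=
  S.biUnion fun σ => σ.powerset.filter fun ν => ν ≠ ∅

/-- The graph on `C` joining two cells whenever their closures intersect is connected. -/
def ConnectedOn (C : Finset (Finset ℕ)) : Prop :=
  ∀ a ∈ C, ∀ b ∈ C,
    Relation.ReflTransGen
      (fun x y => x ∈ C ∧ y ∈ C ∧ (closureOf {x} ∩ closureOf {y}).Nonempty) a b

/-- A nonempty set of cells of `K`, all with the same `f`-value, whose
closure-intersection graph is connected. -/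
def IsPreCollection (K : Finset (Finset ℕ)) (f : Finset ℕ → ℝ) (C : Finset (Finset ℕ)) :
    Prop :=
  C ⊆ K ∧ C.Nonempty ∧ (∀ σ ∈ C, ∀ τ ∈ C, f σ = f τ) ∧ ConnectedOn C

/-- A collection for `f`: a maximal constant-value connected set of cells. -/
def IsCollection (K : Finset (Finset ℕ)) (f : Finset ℕ → ℝ) (C : Finset (Finset ℕ)) :
    Prop :=
  IsPreCollection K f C ∧ ∀ C', IsPreCollection K f C' → C ⊆ C' → C' = C

/-- `#{τ ∉ C : σ < τ, f(τ) < f(σ)}`. -/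
def UpCount (K : Finset (Finset ℕ)) (f : Finset ℕ → ℝ) (C : Finset (Finset ℕ))
    (σ : Finset ℕ) : ℕ :=
  (K.filter fun τ => τ ∉ C ∧ Facet σ τ ∧ f τ < f σ).card

/-- `#{ν ∉ C : ν < σ, f(ν) > f(σ)}`. -/
def DownCount (K : Finset (Finset ℕ)) (f : Finset ℕ → ℝ) (C : Finset (Finset ℕ))
    (σ : Finset ℕ) : ℕ :=
  (K.filter fun ν => ν ∉ C ∧ Facet ν σ ∧ f σ < f ν).card

/-- A discrete Morse-Bott function on `K`. -/
def IsMorseBott (K : Finset (Finset ℕ)) (f : Finset ℕ → ℝ) : Prop :=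
  ∀ C, IsCollection K f C → ∀ σ ∈ C, UpCount K f C σ ≤ 1 ∧ DownCount K f C σ ≤ 1

/-- `σ` is upward noncritical w.r.t. `C`. -/
def UpNoncrit (K : Finset (Finset ℕ)) (f : Finset ℕ → ℝ) (C : Finset (Finset ℕ))
    (σ : Finset ℕ) : Prop :=
  ∃ w ∈ K, w ∉ C ∧ Facet σ w ∧ f w < f σ

/-- `σ` is downward noncritical w.r.t. `C`. -/
def DownNoncrit (K : Finset (Finset ℕ)) (f : Finset ℕ → ℝ) (C : Finset (Finset ℕ))
    (σ : Finset ℕ) : Prop :=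
  ∃ w ∈ K, w ∉ C ∧ Facet w σ ∧ f σ < f w

/-- The reduced collection `C^red`: the cells of `C` that are neither upward nor
downward noncritical w.r.t. `C`. -/
def reducedOf (K : Finset (Finset ℕ)) (f : Finset ℕ → ℝ) (C : Finset (Finset ℕ)) :
    Finset (Finset ℕ) :=
  C.filter fun σ => ¬ UpNoncrit K f C σ ∧ ¬ DownNoncrit K f C σ

/-- A noncritical pair: a two-element set `{σ, τ}` with `σ < τ` and `f σ ≥ f τ`. -/
def IsNoncritPair (f : Finset ℕ → ℝ) (S : Finset (Finset ℕ)) : Prop :=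
  ∃ σ τ, Facet σ τ ∧ f τ ≤ f σ ∧ S = {σ, τ}

/-- A discrete Morse function in Forman's sense. -/
def IsDiscreteMorse (K : Finset (Finset ℕ)) (g : Finset ℕ → ℝ) : Prop :=
  ∀ σ ∈ K, (K.filter fun τ => Facet σ τ ∧ g τ ≤ g σ).card ≤ 1 ∧
    (K.filter fun ν => Facet ν σ ∧ g σ ≤ g ν).card ≤ 1

/-- A critical cell of `g`. -/
def IsCritical (K : Finset (Finset ℕ)) (g : Finset ℕ → ℝ) (σ : Finset ℕ) : Prop :=
  σ ∈ K ∧ (K.filter fun τ => Facet σ τ ∧ g τ ≤ g σ).card = 0 ∧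
    (K.filter fun ν => Facet ν σ ∧ g σ ≤ g ν).card = 0


/-! Among the cells strictly containing `ν` with value below `f ν`, descend by facets: a cell `w`
with `ν.card + 2 ≤ w.card` has two distinct facets containing `ν`, and by the Morse-Bott
condition at `w` (both facets lie outside the collection of `w`) one of them has value at most
`f w`. The descent ends at a cofacet of `ν` of lower value, which therefore is not in `C`. -/

theorem exists_isCollection_mem (K : Finset (Finset ℕ)) (f : Finset ℕ → ℝ)
    {η : Finset ℕ} (hη : η ∈ K) : ∃ C, IsCollection K f C ∧ η ∈ C := by
  set F := K.powerset.filter fun C => IsPreCollection K f C ∧ η ∈ C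
  have hsingleton : ({η} : Finset (Finset ℕ)) ∈ F := by
    refine mem_filter.2 ⟨mem_powerset.2 (by simpa using hη), ⟨by simpa using hη,
      singleton_nonempty η, ?_, ?_⟩, mem_singleton_self η⟩
    · simp
    · intro a ha b hb
      rw [mem_singleton.1 ha, mem_singleton.1 hb]
  -- a precollection of maximal cardinality containing `η` is maximal for inclusion
  obtain ⟨C, hCF, hmax⟩ := F.exists_max_image card ⟨_, hsingleton⟩
  obtain ⟨-, hCpre, hηC⟩ := mem_filter.1 hCF
  refine ⟨C, ⟨hCpre, fun C' hC' hCC' => ?_⟩, hηC⟩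
  have hC'F : C' ∈ F := mem_filter.2 ⟨mem_powerset.2 hC'.1, hC', hCC' hηC⟩
  exact (eq_of_subset_of_card_le hCC' (hmax _ hC'F)).symm

theorem Facet.ssubset {σ τ : Finset ℕ} (h : Facet σ τ) : σ ⊂ τ :=
  ssubset_of_subset_of_ne h.1 fun hστ => by have := h.2; rw [hστ] at this; omega

theorem exists_facets_ne_of_card_add_two_le {ν η : Finset ℕ} (hνη : ν ⊆ η)
    (hcard : ν.card + 2 ≤ η.card) :
    ∃ μ₁ μ₂, μ₁ ≠ μ₂ ∧ ν ⊆ μ₁ ∧ ν ⊆ μ₂ ∧ Facet μ₁ η ∧ Facet μ₂ η := by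
  have hsdiff : 1 < (η \ ν).card := by rw [card_sdiff_of_subset hνη]; omega
  obtain ⟨a, ha, b, hb, hab⟩ := one_lt_card.1 hsdiff
  obtain ⟨haη, haν⟩ := mem_sdiff.1 ha
  obtain ⟨hbη, hbν⟩ := mem_sdiff.1 hb
  have hfacet : ∀ x ∈ η, Facet (η.erase x) η := fun x hx =>
    ⟨erase_subset x η, card_erase_add_one hx⟩
  refine ⟨η.erase a, η.erase b, fun h => ?_, subset_erase.2 ⟨hνη, haν⟩,
    subset_erase.2 ⟨hνη, hbν⟩, hfacet a haη, hfacet b hbη⟩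
  have hb' : b ∈ η.erase a := mem_erase.2 ⟨Ne.symm hab, hbη⟩
  rw [h] at hb'
  exact (mem_erase.1 hb').1 rfl

theorem IsMorseBott.eq_of_facet_of_lt {K : Finset (Finset ℕ)} {f : Finset ℕ → ℝ}
    (hf : IsMorseBott K f) {η μ₁ μ₂ : Finset ℕ} (hη : η ∈ K) (hμ₁ : μ₁ ∈ K) (hμ₂ : μ₂ ∈ K)
    (hμ₁η : Facet μ₁ η) (hμ₂η : Facet μ₂ η) (hf₁ : f η < f μ₁) (hf₂ : f η < f μ₂) :
    μ₁ = μ₂ := by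
  obtain ⟨C, hC, hηC⟩ := exists_isCollection_mem K f hη
  -- `μ₁` and `μ₂` have a different value from `η`, so they lie outside its collection
  have hmem : ∀ μ ∈ K, Facet μ η → f η < f μ →
      μ ∈ K.filter fun x => x ∉ C ∧ Facet x η ∧ f η < f x := fun μ hμ hμη hfμ =>
    mem_filter.2 ⟨hμ, fun hμC => hfμ.ne' (hC.1.2.2.1 μ hμC η hηC), hμη, hfμ⟩
  exact card_le_one.1 (hf C hC η hηC).2 _ (hmem μ₁ hμ₁ hμ₁η hf₁) _ (hmem μ₂ hμ₂ hμ₂η hf₂)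

theorem IsMorseBott.exists_facet_lt_of_ssubset {K : Finset (Finset ℕ)} (hK : IsComplex K)
    {f : Finset ℕ → ℝ} (hf : IsMorseBott K f) {ν w : Finset ℕ} (hw : w ∈ K) (hνw : ν ⊂ w)
    (hfw : f w < f ν) : ∃ η ∈ K, Facet ν η ∧ f η < f ν := by
  induction w using Finset.strongInduction with
  | H w ih =>
    have hcard := card_lt_card hνw
    by_cases hcofacet : ν.card + 1 = w.card
    · exact ⟨w, hw, ⟨hνw.subset, hcofacet⟩, hfw⟩
    obtain ⟨μ₁, μ₂, hne, hνμ₁, hνμ₂, hμ₁w, hμ₂w⟩ :=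
      exists_facets_ne_of_card_add_two_le hνw.subset (by omega)
    have hmemK : ∀ μ, Facet μ w → μ ∈ K := fun μ hμ =>
      hK.2 w hw μ hμ.1 (card_pos.1 (by have := hμ.2; omega))
    have hlow : ∃ μ, Facet μ w ∧ ν ⊆ μ ∧ f μ ≤ f w := by
      by_contra! hall
      exact hne (hf.eq_of_facet_of_lt hw (hmemK μ₁ hμ₁w) (hmemK μ₂ hμ₂w) hμ₁w hμ₂w
        (hall μ₁ hμ₁w hνμ₁) (hall μ₂ hμ₂w hνμ₂))
    obtain ⟨μ, hμw, hνμ, hfμ⟩ := hlow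
    have hνμ' : ν ⊂ μ := ssubset_of_subset_of_ne hνμ fun h => by
      have := hμw.2; rw [← h] at this; omega
    exact ih μ hμw.ssubset (hmemK μ hμw) hνμ' (hfμ.trans_lt hfw)

theorem statement2_general (K : Finset (Finset ℕ)) (hK : IsComplex K) (f : Finset ℕ → ℝ)
    (hf : IsMorseBott K f) (C : Finset (Finset ℕ)) (hC : IsCollection K f C)
    (σ : Finset ℕ) (hσ : σ ∈ C) (hup : UpNoncrit K f C σ)
    (ν : Finset ℕ) (hν₁ : ν ⊆ σ) (hνC : ν ∈ C) :
    UpNoncrit K f C ν := by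
  obtain ⟨w, hwK, -, hσw, hfw⟩ := hup
  have hfν : f ν = f σ := hC.1.2.2.1 ν hνC σ hσ
  obtain ⟨η, hηK, hνη, hfη⟩ := hf.exists_facet_lt_of_ssubset hK hwK
    (hν₁.trans_ssubset hσw.ssubset) (hfν ▸ hfw)
  exact ⟨η, hηK, fun hηC => hfη.ne (hC.1.2.2.1 η hηC ν hνC), hνη, hfη⟩

/-- If `σ ∈ C` is upward noncritical w.r.t. `C`, then every face of `σ`
(a nonempty proper subset of `σ`) that lies in `C` is also upward noncritical w.r.t. `C`. -/
theorem statement2 (K : Finset (Finset ℕ)) (hK : IsComplex K) (f : Finset ℕ → ℝ)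
    (hf : IsMorseBott K f) (C : Finset (Finset ℕ)) (hC : IsCollection K f C)
    (σ : Finset ℕ) (hσ : σ ∈ C) (hup : UpNoncrit K f C σ)
    (ν : Finset ℕ) (hν₁ : ν ⊆ σ) (hν₂ : ν ≠ σ) (hν₃ : ν.Nonempty) (hνC : ν ∈ C) :
    UpNoncrit K f C ν :=
  statement2_general K hK f hf C hC σ hσ hup ν hν₁ hνC
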